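/- arXiv:1403.2165 — 2 statements merged into one kernel-verified Lean document; each statement's English description precedes it below -/
import Mathlib

section
/- For all subsets S, T ⊆ [n], the three counts #{σ ∈ S_n : Cyc(σ)=S and Rmil(σ)=T}, #{σ ∈ S_n : Cyc(σ)=S and Lmap(σ)=T}, #{σ ∈ S_n : Rmil(σ)=S and Lmap(σ)=T} are all equal; moreover each of these pairs of statistics is symmetric, e.g. #{σ : Cyc(σ)=S, Rmil(σ)=T} = #{σ : Cyc(σ)=T, Rmil(σ)=S}, and similarly for (Cyc, Lmap) and (Rmil, Lmap). -/
open scoped Classical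

namespace SortIdx

variable {n : ℕ}

noncomputable section

/-- The inversion number `inv σ := #{(i,j) : i < j ∧ σ i > σ j}`. -/
def inv (σ : Equiv.Perm (Fin n)) : ℕ :=
  (Finset.univ.filter (fun p : Fin n × Fin n => p.1 < p.2 ∧ σ p.2 < σ p.1)).card

/-- The inversion set `Inv σ := {(i,j) : i < j ∧ σ i > σ j}`. -/
def InvSet (σ : Equiv.Perm (Fin n)) : Finset (Fin n × Fin n) :=
  Finset.univ.filter (fun p : Fin n × Fin n => p.1 < p.2 ∧ σ p.2 < σ p.1)

/-- Right-to-left minimum letters. -/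
def RmilSet (σ : Equiv.Perm (Fin n)) : Finset (Fin n) :=
  (Finset.univ.filter (fun i => ∀ j, i < j → σ i < σ j)).image σ

/-- The number of right-to-left minima. -/
def rmin (σ : Equiv.Perm (Fin n)) : ℕ := (RmilSet σ).card

/-- Right-to-left minimum places. -/
def RmipSet (σ : Equiv.Perm (Fin n)) : Finset (Fin n) :=
  Finset.univ.filter (fun i => ∀ j, i < j → σ i < σ j)

/-- Right-to-left maximum letters. -/
def RmalSet (σ : Equiv.Perm (Fin n)) : Finset (Fin n) :=
  (Finset.univ.filter (fun i => ∀ j, i < j → σ j < σ i)).image σ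

/-- The number of right-to-left maxima. -/
def rmax (σ : Equiv.Perm (Fin n)) : ℕ := (RmalSet σ).card

/-- Left-to-right minimum letters. -/
def LmilSet (σ : Equiv.Perm (Fin n)) : Finset (Fin n) :=
  (Finset.univ.filter (fun i => ∀ j, j < i → σ i < σ j)).image σ

/-- The number of left-to-right minima. -/
def lmin (σ : Equiv.Perm (Fin n)) : ℕ := (LmilSet σ).card

/-- Left-to-right minimum places. -/
def LmipSet (σ : Equiv.Perm (Fin n)) : Finset (Fin n) :=
  Finset.univ.filter (fun i => ∀ j, j < i → σ i < σ j)

/-- Left-to-right maximum letters. -/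
def LmalSet (σ : Equiv.Perm (Fin n)) : Finset (Fin n) :=
  (Finset.univ.filter (fun i => ∀ j, j < i → σ j < σ i)).image σ

/-- The number of left-to-right maxima. -/
def lmax (σ : Equiv.Perm (Fin n)) : ℕ := (LmalSet σ).card

/-- Left-to-right maximum places. -/
def LmapSet (σ : Equiv.Perm (Fin n)) : Finset (Fin n) :=
  Finset.univ.filter (fun i => ∀ j, j < i → σ j < σ i)

/-- `Cyc σ`: the set of smallest elements of the cycles of `σ`
(`i` is smallest in its cycle iff `i ≤ σ^k i` for all `k`). -/
def CycSet (σ : Equiv.Perm (Fin n)) : Finset (Fin n) :=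
  Finset.univ.filter (fun i => ∀ k : ℕ, i ≤ (σ ^ k) i)

/-- The number of cycles of `σ` (fixed points included). -/
def cyc (σ : Equiv.Perm (Fin n)) : ℕ := (CycSet σ).card

/-- One step of the sorting process computing the sorting index: repeatedly
put the largest not-yet-fixed letter `j` in its place by the transposition
`(i j)` where `i = σ⁻¹ j` is the place of the letter `j`, recording the
distance `j - i`.  This produces the unique factorization
`σ = (i₁ j₁)(i₂ j₂)⋯(i_k j_k)` with `j₁ < ⋯ < j_k`, `i_r < j_r`, and sums
the `j_r - i_r`.  The fuel `n` is always sufficient. -/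
def sorAux : ℕ → Equiv.Perm (Fin n) → ℕ
  | 0, _ => 0
  | (fuel + 1), σ =>
    if h : σ.support.Nonempty then
      (((σ.support.max' h : Fin n) : ℕ) - ((σ⁻¹ (σ.support.max' h) : Fin n) : ℕ)) +
        sorAux fuel (σ * Equiv.swap (σ⁻¹ (σ.support.max' h)) (σ.support.max' h))
    else 0

/-- The sorting index of Petersen. -/
def sor (σ : Equiv.Perm (Fin n)) : ℕ := sorAux n σ

theorem bcode_exists (σ : Equiv.Perm (Fin n)) (i : Fin n) :
    ∃ k : ℕ, 0 < k ∧ (σ⁻¹ ^ k) i ≤ i := by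
  refine ⟨orderOf σ⁻¹, orderOf_pos σ⁻¹, ?_⟩
  rw [pow_orderOf_eq_one]
  simp

/-- The `B`-code of `σ`: `Bcode σ i = σ^(-k) i` where `k ≥ 1` is minimal with
`σ^(-k) i ≤ i`. -/
def Bcode (σ : Equiv.Perm (Fin n)) (i : Fin n) : Fin n :=
  (σ⁻¹ ^ (Nat.find (bcode_exists σ i))) i

/-- The `B`-code as a sequence in `L_n` (1-indexed values: the entry at place
`i` is the 1-indexed name of the letter `Bcode σ i`). -/
def BcodeNat (σ : Equiv.Perm (Fin n)) : Fin n → ℕ :=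
  fun i => ((Bcode σ i : Fin n) : ℕ) + 1

/-- The Lehmer code: `Leh σ i = #{j : j ≤ i ∧ σ j ≤ σ i}` (1-indexed values). -/
def Leh (σ : Equiv.Perm (Fin n)) : Fin n → ℕ :=
  fun i => (Finset.univ.filter (fun j => j ≤ i ∧ σ j ≤ σ i)).card

/-- The `A`-code: `A σ := Leh σ⁻¹`. -/
def Acode (σ : Equiv.Perm (Fin n)) : Fin n → ℕ := Leh σ⁻¹

/-- `O(code) := {i : code i = 1}` (for `1`-indexed codes in `L_n`). -/
def Oset (code : Fin n → ℕ) : Finset (Fin n) :=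
  Finset.univ.filter (fun i => code i = 1)

/-- `Lmic1 σ := O(B σ)`, the set of places where the `B`-code equals `1`,
equivalently the left-to-right minima of the shifted cycle containing `1`. -/
def Lmic1Set (σ : Equiv.Perm (Fin n)) : Finset (Fin n) :=
  Oset (BcodeNat σ)

/-- `lmic1 σ := #{i : (B σ)_i = 1}`. -/
def lmic1 (σ : Equiv.Perm (Fin n)) : ℕ := (Lmic1Set σ).card

/-- The bijection `φ = B⁻¹ ∘ A` of Foata–Han. -/
def phi (σ : Equiv.Perm (Fin n)) : Equiv.Perm (Fin n) :=
  Function.invFun BcodeNat (Acode σ)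

/-- The algorithm computing the induced set of a code: the list argument is
the list of places still to process (from the last to the first), `S` is the
set of letters still available.  At place `i` we pick the `(code i)`-th
smallest element `l` of `S` (1-indexed), put the pairs `(l, j)` for `j ∈ S`,
`j > l` into the answer and remove `l` from `S`. -/
def inducedAux : List (Fin n) → Finset (Fin n) → (Fin n → ℕ) → Finset (Fin n × Fin n)
  | [], _, _ => ∅
  | (i :: is), S, code =>
      ((S.filter (fun j => (S.sort (· ≤ ·)).getD (code i - 1) i < j)).image
          (fun j => ((S.sort (· ≤ ·)).getD (code i - 1) i, j))) ∪
        inducedAux is (S.erase ((S.sort (· ≤ ·)).getD (code i - 1) i)) code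

/-- The induced set `⟨code⟩` of a code in `L_n`. -/
def induced (code : Fin n → ℕ) : Finset (Fin n × Fin n) :=
  inducedAux (List.finRange n).reverse Finset.univ code

/-- The sorting set `Sor σ := ⟨B σ⟩`. -/
def SorSet (σ : Equiv.Perm (Fin n)) : Finset (Fin n × Fin n) :=
  induced (BcodeNat σ)

/-- The descent set (as a set of places `i`, `0`-indexed, such that
`σ i > σ (i+1)`). -/
def DesSet (σ : Equiv.Perm (Fin n)) : Finset (Fin n) :=
  Finset.univ.filter (fun i => ∃ h : (i : ℕ) + 1 < n, σ ⟨(i : ℕ) + 1, h⟩ < σ i)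

/-- The major index (descents being counted `1`-indexed). -/
def maj (σ : Equiv.Perm (Fin n)) : ℕ :=
  ∑ i ∈ DesSet σ, ((i : ℕ) + 1)

/-- The charge `chg σ := ∑_{i ∈ Des σ⁻¹} (n - i)` (descents `1`-indexed). -/
def chg (σ : Equiv.Perm (Fin n)) : ℕ :=
  ∑ i ∈ DesSet σ⁻¹, (n - ((i : ℕ) + 1))

/-- The reverse-complement of `σ` : `τ i = n + 1 - σ (n + 1 - i)` (1-indexed). -/
def revcomp (σ : Equiv.Perm (Fin n)) : Equiv.Perm (Fin n) :=
  Fin.revPerm * σ * Fin.revPerm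

/-- The reverse major index `rmaj σ := maj (revcomp σ)`. -/
def rmaj (σ : Equiv.Perm (Fin n)) : ℕ := maj (revcomp σ)

end

end SortIdx

/-!
Inversion preserves `Cyc` and exchanges `Rmil` with `Lmap`, so everything reduces to the
equidistribution of `(Cyc, Lmap)` and `(Rmil, Lmap)`, which is proved by a bijection built by
induction on `n`. A permutation `σ` of `Fin (n + 1)` with the maximal letter at place `p` is
`extendLast τ * ζ p` for a unique `τ`, both for `ζ p = swap p (last n)` (insert the maximal
letter into the cycle of `τ` right after `p`, or as a fixed point if `p` is last) and for
`ζ p = moveToLast p` (insert the maximal letter into the word of `τ` at place `p`). Either way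
`Lmap σ` consists of `p` and the places of `Lmap τ` before `p`, while `Cyc σ` (resp. `Rmil σ`) is
`Cyc τ` (resp. `Rmil τ`), together with the maximal letter exactly when `p` is last. So sending
the cycle insertion of `(p, τ)` to the word insertion of `(p, cycToRmil n τ)` carries
`(Cyc, Lmap)` to `(Rmil, Lmap)`.
-/

namespace SortIdx

open Equiv Equiv.Perm Finset Fin

variable {n : ℕ}

lemma mem_rmilSet {σ : Perm (Fin n)} {v : Fin n} :
    v ∈ RmilSet σ ↔ ∀ j, σ⁻¹ v < j → v < σ j := by
  simp only [RmilSet, mem_image, mem_filter, mem_univ, true_and]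
  constructor
  · rintro ⟨i, hi, rfl⟩
    simpa using hi
  · exact fun h => ⟨σ⁻¹ v, by simpa using h, by simp⟩

lemma mem_lmapSet {σ : Perm (Fin n)} {i : Fin n} :
    i ∈ LmapSet σ ↔ ∀ j, j < i → σ j < σ i := by
  simp [LmapSet]

lemma mem_cycSet {σ : Perm (Fin n)} {i : Fin n} :
    i ∈ CycSet σ ↔ ∀ j, σ.SameCycle i j → i ≤ j := by
  simp only [CycSet, mem_filter, mem_univ, true_and]
  constructor
  · intro h j hij
    obtain ⟨k, rfl⟩ := hij.exists_nat_pow_eq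
    exact h k
  · exact fun h k => h _ (sameCycle_pow_right.2 SameCycle.rfl)

lemma cycSet_inv (σ : Perm (Fin n)) : CycSet σ⁻¹ = CycSet σ := by
  ext i
  simp only [mem_cycSet, sameCycle_inv]

lemma rmilSet_inv (σ : Perm (Fin n)) : RmilSet σ⁻¹ = LmapSet σ := by
  ext v
  rw [mem_rmilSet, mem_lmapSet, inv_inv]
  constructor
  · intro h u huv
    have hu := h (σ u)
    simp only [coe_inv, symm_apply_apply] at hu
    exact lt_of_le_of_ne (not_lt.1 fun hvu => (hu hvu).not_gt huv) (σ.injective.ne huv.ne)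
  · intro h j hvj
    obtain ⟨u, rfl⟩ := σ.surjective j
    simp only [coe_inv, symm_apply_apply]
    by_contra! huv
    rcases huv.lt_or_eq with huv | rfl
    exacts [(h u huv).not_gt hvj, hvj.false]

lemma lmapSet_inv (σ : Perm (Fin n)) : LmapSet σ⁻¹ = RmilSet σ := by
  simpa using (rmilSet_inv σ⁻¹).symm

def extendLast (τ : Perm (Fin n)) : Perm (Fin (n + 1)) :=
  finSuccEquivLast.symm.permCongr τ.optionCongr

@[simp] lemma extendLast_castSucc (τ : Perm (Fin n)) (j : Fin n) :
    extendLast τ (castSucc j) = castSucc (τ j) := by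
  simp [extendLast, permCongr_apply, finSuccEquivLast_symm_some]

@[simp] lemma extendLast_last (τ : Perm (Fin n)) : extendLast τ (last n) = last n := by
  simp [extendLast, permCongr_apply]

lemma extendLast_injective : Function.Injective (extendLast (n := n)) :=
  (permCongr _).injective.comp optionCongr_injective

lemma exists_extendLast_eq {σ : Perm (Fin (n + 1))} (h : σ (last n) = last n) :
    ∃ τ, extendLast τ = σ := by
  set σ' := (finSuccEquivLast.symm.permCongr).symm σ
  have hσ' : σ' none = none := by simp [σ', permCongr_apply, h]
  refine ⟨removeNone σ', ?_⟩
  rw [extendLast, map_equiv_removeNone, hσ', swap_self, ← Perm.one_def, one_mul, apply_symm_apply]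

def moveToLast (p : Fin (n + 1)) : Perm (Fin (n + 1)) :=
  (finSuccEquiv' p).trans finSuccEquivLast.symm

@[simp] lemma moveToLast_self (p : Fin (n + 1)) : moveToLast p p = last n := by
  simp [moveToLast]

@[simp] lemma moveToLast_succAbove (p : Fin (n + 1)) (j : Fin n) :
    moveToLast p (p.succAbove j) = castSucc j := by
  simp [moveToLast]

lemma moveToLast_castSucc_of_lt {p : Fin (n + 1)} {j : Fin n} (hj : castSucc j < p) :
    moveToLast p (castSucc j) = castSucc j := by
  simpa [succAbove_of_castSucc_lt p j hj] using moveToLast_succAbove p j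

noncomputable def insertMaxEquiv (ζ : Fin (n + 1) → Perm (Fin (n + 1)))
    (hζ : ∀ p, ζ p p = last n) : Fin (n + 1) × Perm (Fin n) ≃ Perm (Fin (n + 1)) :=
  Equiv.ofBijective (fun x => extendLast x.2 * ζ x.1) <| by
    have hp : ∀ p (τ : Perm (Fin n)), (extendLast τ * ζ p) p = last n := by simp [hζ]
    refine ⟨fun ⟨p₁, τ₁⟩ ⟨p₂, τ₂⟩ h => ?_, fun σ => ?_⟩
    · dsimp only at h
      obtain rfl : p₁ = p₂ :=
        (extendLast τ₂ * ζ p₂).injective ((h ▸ hp p₁ τ₁).trans (hp p₂ τ₂).symm)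
      rw [extendLast_injective (mul_right_cancel h)]
    · set p := σ⁻¹ (last n)
      have hfix : (σ * (ζ p)⁻¹) (last n) = last n := by
        rw [Perm.mul_apply, ← hζ p, coe_inv, symm_apply_apply, hζ]
        exact σ.apply_symm_apply _
      obtain ⟨τ, hτ⟩ := exists_extendLast_eq hfix
      exact ⟨(p, τ), by simp [hτ]⟩

@[simp] lemma insertMaxEquiv_apply (ζ : Fin (n + 1) → Perm (Fin (n + 1)))
    (hζ : ∀ p, ζ p p = last n) (p : Fin (n + 1)) (τ : Perm (Fin n)) :
    insertMaxEquiv ζ hζ (p, τ) = extendLast τ * ζ p := rfl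

def extendSet (p : Fin (n + 1)) (A : Finset (Fin n)) : Finset (Fin (n + 1)) :=
  A.image castSucc ∪ if p = last n then {last n} else ∅

@[simp] lemma castSucc_mem_extendSet {p : Fin (n + 1)} {A : Finset (Fin n)} {i : Fin n} :
    castSucc i ∈ extendSet p A ↔ i ∈ A := by
  by_cases hp : p = last n <;> simp [extendSet, hp, castSucc_ne_last]

@[simp] lemma last_mem_extendSet {p : Fin (n + 1)} {A : Finset (Fin n)} :
    last n ∈ extendSet p A ↔ p = last n := by
  by_cases hp : p = last n <;> simp [extendSet, hp]

lemma castSucc_mem_lmapSet_extendLast_mul {τ : Perm (Fin n)} {π : Perm (Fin (n + 1))}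
    {p : Fin (n + 1)} (hπ : ∀ j : Fin n, castSucc j < p → π (castSucc j) = castSucc j)
    {i : Fin n} (hi : castSucc i < p) :
    castSucc i ∈ LmapSet (extendLast τ * π) ↔ i ∈ LmapSet τ := by
  have hσ : ∀ j : Fin n, castSucc j ≤ castSucc i →
      (extendLast τ * π) (castSucc j) = castSucc (τ j) := fun j hj => by
    rw [Perm.mul_apply, hπ j (hj.trans_lt hi), extendLast_castSucc]
  simp only [mem_lmapSet, forall_fin_succ', not_lt.2 (le_last _), false_imp_iff, and_true,
    castSucc_lt_castSucc_iff]
  refine forall₂_congr fun j hj => ?_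
  rw [hσ j hj.le, hσ i le_rfl, castSucc_lt_castSucc_iff]

lemma lmapSet_extendLast_mul (τ : Perm (Fin n)) {π : Perm (Fin (n + 1))} {p : Fin (n + 1)}
    (hp : π p = last n) (hπ : ∀ j : Fin n, castSucc j < p → π (castSucc j) = castSucc j) :
    LmapSet (extendLast τ * π) = ((LmapSet τ).filter (castSucc · < p)).image castSucc ∪ {p} := by
  set σ := extendLast τ * π
  have hσp : σ p = last n := by simp [σ, hp]
  ext i
  simp only [mem_union, mem_image, mem_filter, mem_singleton]
  rcases lt_trichotomy i p with hip | rfl | hpi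
  · obtain ⟨i, rfl⟩ : ∃ i' : Fin n, castSucc i' = i :=
      ⟨i.castPred (hip.trans_le (le_last p)).ne, castSucc_castPred _ _⟩
    rw [castSucc_mem_lmapSet_extendLast_mul hπ hip]
    simp [hip, hip.ne]
  · refine iff_of_true (mem_lmapSet.2 fun j hj => ?_) (Or.inr rfl)
    have hne := σ.injective.ne hj.ne
    rw [hσp] at hne ⊢
    exact lt_of_le_of_ne (le_last _) hne
  · refine iff_of_false (fun h => (mem_lmapSet.1 h p hpi).not_ge (hσp ▸ le_last _)) ?_
    rintro (⟨j, ⟨-, hj⟩, rfl⟩ | rfl)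
    exacts [hj.not_gt hpi, hpi.false]

lemma rmilSet_extendLast_mul_moveToLast (τ : Perm (Fin n)) (p : Fin (n + 1)) :
    RmilSet (extendLast τ * moveToLast p) = extendSet p (RmilSet τ) := by
  set σ := extendLast τ * moveToLast p
  have hσp : σ p = last n := by simp [σ]
  have hσ : ∀ j, σ (p.succAbove j) = castSucc (τ j) := by simp [σ]
  ext v
  cases v using Fin.lastCases with
  | last =>
    have hp : σ⁻¹ (last n) = p := by rw [← hσp]; simp
    rw [last_mem_extendSet, mem_rmilSet, hp]
    simp only [not_lt.2 (le_last _), imp_false, not_lt]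
    exact ⟨fun h => last_le_iff.1 (h _), fun h j => h ▸ le_last j⟩
  | cast u =>
    have hu : σ⁻¹ (castSucc u) = p.succAbove (τ⁻¹ u) := by
      rw [← τ.apply_symm_apply u, ← hσ]
      simp
    rw [castSucc_mem_extendSet, mem_rmilSet, hu, forall_iff_succAbove p, mem_rmilSet]
    simp only [hσp, castSucc_lt_last, implies_true, true_and, hσ, succAbove_lt_succAbove_iff,
      castSucc_lt_castSucc_iff]

lemma last_mem_cycSet_iff {σ : Perm (Fin (n + 1))} :
    last n ∈ CycSet σ ↔ σ (last n) = last n := by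
  simp only [CycSet, mem_filter, mem_univ, true_and]
  refine ⟨fun h => last_le_iff.1 (by simpa using h 1), fun h k => ?_⟩
  rw [pow_apply_eq_self_of_apply_eq_self h]

/-- `σ` arises from `τ` by inserting `last n` into one of its cycles (right after `x` in the
second alternative) or as a new fixed point. -/
def IsCycleInsertion (σ : Perm (Fin (n + 1))) (τ : Perm (Fin n)) : Prop :=
  ∀ x, σ (castSucc x) = castSucc (τ x) ∨ σ (castSucc x) = last n ∧ σ (last n) = castSucc (τ x)

lemma isCycleInsertion_extendLast_mul_swap (τ : Perm (Fin n)) (p : Fin (n + 1)) :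
    IsCycleInsertion (extendLast τ * swap p (last n)) τ := fun x => by
  by_cases hx : castSucc x = p
  · simp [← hx]
  · simp [swap_apply_of_ne_of_ne hx (castSucc_ne_last x)]

namespace IsCycleInsertion

variable {σ : Perm (Fin (n + 1))} {τ : Perm (Fin n)}

lemma sameCycle_castSucc_apply (hστ : IsCycleInsertion σ τ) (x : Fin n) :
    σ.SameCycle (castSucc x) (castSucc (τ x)) := by
  rcases hστ x with h | ⟨h, h'⟩
  · exact h ▸ sameCycle_apply_right.2 SameCycle.rfl
  · rw [← h', ← h]
    exact sameCycle_apply_right.2 (sameCycle_apply_right.2 SameCycle.rfl)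

lemma sameCycle_castSucc (hστ : IsCycleInsertion σ τ) {i j : Fin n} (h : τ.SameCycle i j) :
    σ.SameCycle (castSucc i) (castSucc j) := by
  obtain ⟨k, rfl⟩ := h.exists_nat_pow_eq
  clear h
  induction k with
  | zero => exact SameCycle.rfl
  | succ k ih =>
    rw [pow_succ', Perm.mul_apply]
    exact ih.trans (hστ.sameCycle_castSucc_apply _)

lemma eq_last_or_castSucc_of_sameCycle (hστ : IsCycleInsertion σ τ) {i : Fin n}
    {y : Fin (n + 1)} (h : σ.SameCycle (castSucc i) y) :
    y = last n ∨ ∃ x, y = castSucc x ∧ τ.SameCycle i x := by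
  let s : Set (Fin (n + 1)) := {y | (∃ x, y = castSucc x ∧ τ.SameCycle i x) ∨
    y = last n ∧ ∃ x, σ (castSucc x) = last n ∧ τ.SameCycle i x}
  have hs : Set.MapsTo σ s s := by
    rintro _ (⟨x, rfl, hx⟩ | ⟨rfl, x, hx, hix⟩)
    · rcases hστ x with h | ⟨h, -⟩
      · exact Or.inl ⟨τ x, h, hx.trans (sameCycle_apply_right.2 SameCycle.rfl)⟩
      · exact Or.inr ⟨h, x, h, hx⟩
    · rcases hστ x with h | ⟨-, h⟩
      · exact absurd (h.symm.trans hx) (castSucc_ne_last _)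
      · exact Or.inl ⟨τ x, h, hix.trans (sameCycle_apply_right.2 SameCycle.rfl)⟩
  obtain ⟨k, rfl⟩ := h.exists_nat_pow_eq
  rcases coe_pow σ k ▸ hs.iterate k (Or.inl ⟨i, rfl, SameCycle.rfl⟩) with hy | ⟨hy, -⟩
  exacts [Or.inr hy, Or.inl hy]

lemma castSucc_mem_cycSet_iff (hστ : IsCycleInsertion σ τ) {i : Fin n} :
    castSucc i ∈ CycSet σ ↔ i ∈ CycSet τ := by
  rw [mem_cycSet, mem_cycSet]
  refine ⟨fun h j hj => castSucc_le_castSucc_iff.1 (h _ (hστ.sameCycle_castSucc hj)),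
    fun h y hy => ?_⟩
  rcases hστ.eq_last_or_castSucc_of_sameCycle hy with rfl | ⟨x, rfl, hx⟩
  exacts [le_last _, castSucc_le_castSucc_iff.2 (h x hx)]

end IsCycleInsertion

lemma cycSet_extendLast_mul_swap (τ : Perm (Fin n)) (p : Fin (n + 1)) :
    CycSet (extendLast τ * swap p (last n)) = extendSet p (CycSet τ) := by
  ext v
  cases v using Fin.lastCases with
  | last =>
    rw [last_mem_extendSet, last_mem_cycSet_iff, Perm.mul_apply, swap_apply_right,
      (extendLast τ).injective.eq_iff' (extendLast_last τ)]
  | cast u =>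
    rw [castSucc_mem_extendSet,
      (isCycleInsertion_extendLast_mul_swap τ p).castSucc_mem_cycSet_iff]

noncomputable def cycToRmil : (n : ℕ) → Perm (Fin n) ≃ Perm (Fin n)
  | 0 => Equiv.refl _
  | n + 1 => (insertMaxEquiv (swap · (last n)) (swap_apply_left · _)).symm.trans <|
      (prodCongr (Equiv.refl _) (cycToRmil n)).trans (insertMaxEquiv moveToLast moveToLast_self)

lemma cycToRmil_extendLast_mul_swap (τ : Perm (Fin n)) (p : Fin (n + 1)) :
    cycToRmil (n + 1) (extendLast τ * swap p (last n)) =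
      extendLast (cycToRmil n τ) * moveToLast p := by
  have h := (insertMaxEquiv _ (swap_apply_left · (last n))).symm_apply_apply (p, τ)
  rw [insertMaxEquiv_apply] at h
  simp [cycToRmil, h]

lemma rmilSet_cycToRmil (σ : Perm (Fin n)) : RmilSet (cycToRmil n σ) = CycSet σ := by
  induction n with
  | zero => exact Subsingleton.elim _ _
  | succ n ih =>
    obtain ⟨⟨p, τ⟩, rfl⟩ := (insertMaxEquiv _ (swap_apply_left · (last n))).surjective σ
    rw [insertMaxEquiv_apply, cycToRmil_extendLast_mul_swap, rmilSet_extendLast_mul_moveToLast,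
      cycSet_extendLast_mul_swap, ih]

lemma lmapSet_cycToRmil (σ : Perm (Fin n)) : LmapSet (cycToRmil n σ) = LmapSet σ := by
  induction n with
  | zero => exact Subsingleton.elim _ _
  | succ n ih =>
    obtain ⟨⟨p, τ⟩, rfl⟩ := (insertMaxEquiv _ (swap_apply_left · (last n))).surjective σ
    rw [insertMaxEquiv_apply, cycToRmil_extendLast_mul_swap,
      lmapSet_extendLast_mul _ (moveToLast_self p) fun _ => moveToLast_castSucc_of_lt,
      lmapSet_extendLast_mul _ (swap_apply_left p (last n))
        fun j hj => swap_apply_of_ne_of_ne hj.ne (castSucc_ne_last j), ih]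

lemma card_cycSet_rmilSet_eq_card_cycSet_lmapSet (S T : Finset (Fin n)) :
    Nat.card {σ : Perm (Fin n) // CycSet σ = S ∧ RmilSet σ = T} =
      Nat.card {σ : Perm (Fin n) // CycSet σ = S ∧ LmapSet σ = T} :=
  Nat.card_congr <| (Equiv.inv _).subtypeEquiv fun σ => by
    rw [Equiv.inv_apply, cycSet_inv, lmapSet_inv]

lemma card_cycSet_lmapSet_eq_card_rmilSet_lmapSet (S T : Finset (Fin n)) :
    Nat.card {σ : Perm (Fin n) // CycSet σ = S ∧ LmapSet σ = T} =
      Nat.card {σ : Perm (Fin n) // RmilSet σ = S ∧ LmapSet σ = T} :=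
  Nat.card_congr <| (cycToRmil n).subtypeEquiv fun σ => by
    rw [rmilSet_cycToRmil, lmapSet_cycToRmil]

lemma card_rmilSet_lmapSet_comm (S T : Finset (Fin n)) :
    Nat.card {σ : Perm (Fin n) // RmilSet σ = S ∧ LmapSet σ = T} =
      Nat.card {σ : Perm (Fin n) // RmilSet σ = T ∧ LmapSet σ = S} :=
  Nat.card_congr <| (Equiv.inv _).subtypeEquiv fun σ => by
    rw [Equiv.inv_apply, rmilSet_inv, lmapSet_inv, and_comm]

end SortIdx

/-- Foata–Han.  The pairs of set-valued statistics
`(Cyc, Rmil)`, `(Cyc, Lmap)`, `(Rmil, Lmap)` are jointly equidistributed and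
each is symmetric. -/
theorem cyc_rmil_lmap_pairs_equidistributed (n : ℕ) (S T : Finset (Fin n)) :
    (Nat.card {σ : Equiv.Perm (Fin n) // SortIdx.CycSet σ = S ∧ SortIdx.RmilSet σ = T} =
      Nat.card {σ : Equiv.Perm (Fin n) // SortIdx.CycSet σ = S ∧ SortIdx.LmapSet σ = T}) ∧
    (Nat.card {σ : Equiv.Perm (Fin n) // SortIdx.CycSet σ = S ∧ SortIdx.LmapSet σ = T} =
      Nat.card {σ : Equiv.Perm (Fin n) // SortIdx.RmilSet σ = S ∧ SortIdx.LmapSet σ = T}) ∧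
    (Nat.card {σ : Equiv.Perm (Fin n) // SortIdx.CycSet σ = S ∧ SortIdx.RmilSet σ = T} =
      Nat.card {σ : Equiv.Perm (Fin n) // SortIdx.CycSet σ = T ∧ SortIdx.RmilSet σ = S}) ∧
    (Nat.card {σ : Equiv.Perm (Fin n) // SortIdx.CycSet σ = S ∧ SortIdx.LmapSet σ = T} =
      Nat.card {σ : Equiv.Perm (Fin n) // SortIdx.CycSet σ = T ∧ SortIdx.LmapSet σ = S}) ∧
    (Nat.card {σ : Equiv.Perm (Fin n) // SortIdx.RmilSet σ = S ∧ SortIdx.LmapSet σ = T} =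
      Nat.card {σ : Equiv.Perm (Fin n) // SortIdx.RmilSet σ = T ∧ SortIdx.LmapSet σ = S}) := by
  have inversion := SortIdx.card_cycSet_rmilSet_eq_card_cycSet_lmapSet (n := n)
  have bijection := SortIdx.card_cycSet_lmapSet_eq_card_rmilSet_lmapSet (n := n)
  have rmil_lmap_comm := SortIdx.card_rmilSet_lmapSet_comm (n := n)
  have cyc_lmap_comm : ∀ S T : Finset (Fin n),
      Nat.card {σ : Equiv.Perm (Fin n) // SortIdx.CycSet σ = S ∧ SortIdx.LmapSet σ = T} =
        Nat.card {σ : Equiv.Perm (Fin n) // SortIdx.CycSet σ = T ∧ SortIdx.LmapSet σ = S} :=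
    fun S T => by rw [bijection, bijection, rmil_lmap_comm]
  exact ⟨inversion S T, bijection S T, by rw [inversion, inversion, cyc_lmap_comm],
    cyc_lmap_comm S T, rmil_lmap_comm S T⟩
end

section
/- For every n ≥ 1 and all natural numbers a, b, c, d: #{σ ∈ S_n : inv(σ)=a, rmin(σ)=b, lmax(σ)=c, lmin(σ)=d} = #{σ ∈ S_n : sor(σ)=a, cyc(σ)=b, lmax(σ)=c, lmic1(σ)=d}; that is, the quadruples of statistics (inv, rmin, lmax, lmin) and (sor, cyc, lmax, lmic1) have the same joint distribution over S_n. -/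
open scoped Classical

/-!
Both quadruples are carried to one quadruple of statistics on subexcedant functions
`f : Fin n → Fin n` (`f i ≤ i`): the total `∑ (i - f i)`, the number of fixed points, the number
of `i` with `f i < f j` for all `j > i`, and the number of zeros. On the first side the coding is
the Lehmer code `i ↦ #{j < i | σ⁻¹ j < σ⁻¹ i}` of `σ⁻¹`, on the second the `B`-code. Both codings
are injective, hence bijective as there are `n!` subexcedant functions.

For the `B`-code the key fact is that one step `σ ↦ σ * swap (σ⁻¹ j) j` of the sorting
algorithm, with `j` the largest point moved by `σ`, just cuts `j` out of its cycle. This does not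
change where the backward orbit of any other point `m` first returns to `{0, …, m}`, so the
`B`-code only changes at `j`, where it goes from `σ⁻¹ j` to `j`. Induction on the number of steps
then gives `sor σ = ∑ (i - B σ i)` and the injectivity of `B`.
-/

theorem Finset.strictMonoOn_card_filter_lt {α : Type*} [LinearOrder α] (s : Finset α) :
    StrictMonoOn (fun x => (s.filter (· < x)).card) s := by
  intro x hx y _ hxy
  refine Finset.card_lt_card ((Finset.ssubset_iff_of_subset fun z hz => ?_).2
    ⟨x, Finset.mem_filter.2 ⟨hx, hxy⟩, by simp⟩)
  simp only [Finset.mem_filter] at hz ⊢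
  exact ⟨hz.1, hz.2.trans hxy⟩

theorem Equiv.Perm.mem_image_filter_iff {α : Type*} [Fintype α] [DecidableEq α] (σ : Perm α)
    (p : α → Prop) [DecidablePred p] (l : α) :
    l ∈ (Finset.univ.filter p).image σ ↔ p (σ⁻¹ l) := by
  rw [← Finset.mem_coe, Finset.coe_image, Set.mem_image_equiv]
  simp

/-- `FirstExit f U x y`: `y` is the first point of the orbit `f x, f (f x), …` outside `U`. -/
inductive FirstExit {α : Type*} (f : α → α) (U : Set α) : α → α → Prop
  | exit {x : α} : f x ∉ U → FirstExit f U x (f x)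
  | pass {x y : α} : f x ∈ U → FirstExit f U (f x) y → FirstExit f U x y

namespace FirstExit

open Equiv

variable {α : Type*} {f : α → α} {U : Set α} {x y z : α}

theorem notMem (h : FirstExit f U x y) : y ∉ U := by
  induction h with
  | exit hx => exact hx
  | pass _ _ ih => exact ih

theorem unique (h : FirstExit f U x y) (h' : FirstExit f U x z) : y = z := by
  induction h generalizing z with
  | exit hx => cases h' with
    | exit _ => rfl
    | pass hx' _ => exact absurd hx' hx
  | pass hx _ ih => cases h' with
    | exit hx' => exact absurd hx hx'
    | pass _ h'' => exact ih h''

theorem exit_or_pass (h : FirstExit f U x y) :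
    f x = y ∨ f x ∈ U ∧ FirstExit f U (f x) y := by
  cases h with
  | exit _ => exact .inl rfl
  | pass hx h => exact .inr ⟨hx, h⟩

theorem exists_apply_eq (h : FirstExit f U x y) : ∃ z, (z = x ∨ z ∈ U) ∧ f z = y := by
  induction h with
  | @exit x _ => exact ⟨x, .inl rfl, rfl⟩
  | pass hx _ ih =>
    obtain ⟨z, hz, hfz⟩ := ih
    exact ⟨z, .inr (hz.elim (· ▸ hx) id), hfz⟩

theorem of_iterate {k : ℕ} (hk : 0 < k) (hU : f^[k] x ∉ U)
    (hmin : ∀ r, 0 < r → r < k → f^[r] x ∈ U) : FirstExit f U x (f^[k] x) := by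
  induction k generalizing x with
  | zero => exact absurd hk (lt_irrefl 0)
  | succ k ih =>
    rcases Nat.eq_zero_or_pos k with rfl | hk
    · exact exit hU
    rw [Function.iterate_succ_apply] at hU ⊢
    refine pass (hmin 1 one_pos (by omega)) (ih hk hU fun r hr hrk => ?_)
    simpa only [Function.iterate_succ_apply] using hmin (r + 1) (by omega) (by omega)

theorem iterate_eq_or_mem (h : FirstExit f U x x) (k : ℕ) : f^[k] x = x ∨ f^[k] x ∈ U := by
  suffices hk : f^[k] x = x ∨ f^[k] x ∈ U ∧ FirstExit f U (f^[k] x) x from hk.imp_right And.left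
  induction k with
  | zero => exact .inl rfl
  | succ k ih =>
    rw [Function.iterate_succ_apply']
    obtain hk | ⟨-, hk⟩ := ih
    · rw [hk]
      exact h.exit_or_pass
    · exact hk.exit_or_pass

/-- Removing a point `p ∈ U` from the cycle of a permutation `f` (so that `f⁻¹ p ↦ f p`)
does not change the first exits from `U` of the other points. -/
theorem of_swap_mul [DecidableEq α] {f : Perm α} {p : α} (hp : p ∈ U)
    (h : FirstExit (swap (f p) p * f) U x y) (hx : x ≠ p) : FirstExit f U x y := by
  have hg (x : α) (hx : x ≠ p) : (swap (f p) p * f) x = if f x = p then f p else f x := by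
    split_ifs with hfx
    · simp [hfx]
    · exact swap_apply_of_ne_of_ne (f.injective.ne hx) hfx
  induction h with
  | @exit x hU =>
    rw [hg x hx] at hU ⊢
    split_ifs at hU ⊢ with hfx
    · exact pass (hfx ▸ hp) (by rw [hfx]; exact exit hU)
    · exact exit hU
  | @pass x y hU _ ih =>
    have hne : (swap (f p) p * f) x ≠ p := by
      simpa [swap_apply_eq_iff] using hx
    have ih := ih hne
    rw [hg x hx] at hU ih
    split_ifs at hU ih with hfx
    · exact pass (hfx ▸ hp) (by rw [hfx]; exact pass hU ih)
    · exact pass hU ih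

end FirstExit

namespace SortIdx

open Finset Equiv Function

variable {n : ℕ}

abbrev SubexcedantFun (n : ℕ) := {f : Fin n → Fin n // ∀ i, f i ≤ i}

def SubexcedantFun.equivPi : SubexcedantFun n ≃ ((i : Fin n) → Fin (i + 1)) where
  toFun f i := ⟨f.1 i, Nat.lt_succ_of_le (f.2 i)⟩
  invFun g := ⟨fun i => ⟨g i, (g i).2.trans_le i.2⟩, fun i => Nat.le_of_lt_succ (g i).2⟩
  left_inv _ := rfl
  right_inv _ := rfl

theorem SubexcedantFun.card : Fintype.card (SubexcedantFun n) = n.factorial := by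
  rw [Fintype.card_congr equivPi, Fintype.card_pi]
  simp only [Fintype.card_fin]
  rw [Fin.prod_univ_eq_prod_range (· + 1), prod_range_add_one_eq_factorial]

theorem SubexcedantFun.natCard_fiber_eq {γ : Type*} {e : Perm (Fin n) → SubexcedantFun n}
    (he : Injective e) (s : Perm (Fin n) → γ) (t : (Fin n → Fin n) → γ)
    (h : ∀ σ, t (e σ).1 = s σ) (c : γ) :
    Nat.card {σ // s σ = c} = Nat.card {f : SubexcedantFun n // t f.1 = c} := by
  have hbij : Bijective e := (Fintype.bijective_iff_injective_and_card e).2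
    ⟨he, by rw [SubexcedantFun.card, Fintype.card_perm, Fintype.card_fin]⟩
  exact Nat.card_congr ((Equiv.ofBijective e hbij).subtypeEquiv fun σ => by simp [h])

def codeStats (f : Fin n → Fin n) : ℕ × ℕ × ℕ × ℕ :=
  (∑ i : Fin n, ((i : ℕ) - f i), #{i | f i = i}, #{i | ∀ j, i < j → f i < f j},
    #{i | (f i : ℕ) = 0})

theorem mem_RmilSet_iff (σ : Perm (Fin n)) (l : Fin n) :
    l ∈ RmilSet σ ↔ ∀ m, m < l → σ⁻¹ m < σ⁻¹ l := by
  rw [RmilSet, Perm.mem_image_filter_iff, ← σ⁻¹.forall_congr_right]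
  refine forall_congr' fun m => ?_
  have := σ.symm.injective.eq_iff (a := m) (b := l)
  simp only [Perm.coe_inv, apply_symm_apply]
  grind

theorem mem_LmilSet_iff (σ : Perm (Fin n)) (l : Fin n) :
    l ∈ LmilSet σ ↔ ∀ m, m < l → σ⁻¹ l < σ⁻¹ m := by
  rw [LmilSet, Perm.mem_image_filter_iff, ← σ⁻¹.forall_congr_right]
  refine forall_congr' fun m => ?_
  have := σ.symm.injective.eq_iff (a := m) (b := l)
  simp only [Perm.coe_inv, apply_symm_apply]
  grind

theorem mem_LmalSet_iff (σ : Perm (Fin n)) (l : Fin n) :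
    l ∈ LmalSet σ ↔ ∀ m, l < m → σ⁻¹ l < σ⁻¹ m := by
  rw [LmalSet, Perm.mem_image_filter_iff, ← σ⁻¹.forall_congr_right]
  refine forall_congr' fun m => ?_
  have := σ.symm.injective.eq_iff (a := m) (b := l)
  simp only [Perm.coe_inv, apply_symm_apply]
  grind

theorem inv_inv_eq_inv (σ : Perm (Fin n)) : inv σ⁻¹ = inv σ :=
  card_nbij' (fun p => (σ⁻¹ p.2, σ⁻¹ p.1)) (fun p => (σ p.2, σ p.1))
    (fun p hp => by simp_all) (fun p hp => by simp_all) (fun p _ => by simp) (fun p _ => by simp)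

section Lehmer

variable (τ : Perm (Fin n))

/-- `lehmer σ⁻¹` is the paper's `A`-code, shifted to take values from `0`. -/
def lehmer (i : Fin n) : Fin n :=
  ⟨#{j ∈ Iio i | τ j < τ i}, ((card_filter_le _ _).trans (Fin.card_Iio i).le).trans_lt i.2⟩

theorem lehmer_le (i : Fin n) : lehmer τ i ≤ i :=
  (card_filter_le _ _).trans (Fin.card_Iio i).le

def lehmerCode : SubexcedantFun n := ⟨lehmer τ, lehmer_le τ⟩

theorem lehmer_eq_card_filter (i : Fin n) :
    (lehmer τ i : ℕ) = #((univ.filter fun x => τ⁻¹ x ≤ i).filter (· < τ i)) := by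
  refine card_nbij' τ ⇑τ⁻¹ (fun j hj => ?_) (fun x hx => ?_) (fun j _ => by simp)
    (fun x _ => by simp)
  · simp only [coe_filter, mem_Iio, mem_filter, mem_univ, true_and] at hj ⊢
    simpa using ⟨hj.1.le, hj.2⟩
  · simp only [coe_filter, mem_univ, true_and, mem_filter, mem_Iio] at hx ⊢
    refine ⟨hx.1.lt_of_ne fun h => hx.2.ne ?_, by simpa using hx.2⟩
    simp [← h]

/-- The letters in the places `≤ i` are those not in the places `> i`, so the whole
permutation can be read off its Lehmer code from right to left. -/
theorem lehmerCode_injective : Injective (lehmerCode (n := n)) := by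
  intro τ τ' h
  by_contra hne
  have hS : (univ.filter fun i => τ i ≠ τ' i).Nonempty := by
    obtain ⟨i, hi⟩ := not_forall.1 (mt Perm.ext hne)
    exact ⟨i, by simpa using hi⟩
  set i := (univ.filter fun i => τ i ≠ τ' i).max' hS
  have hi : τ i ≠ τ' i := (mem_filter.1 (max'_mem _ hS)).2
  have hright (j : Fin n) (hj : i < j) : τ j = τ' j := by
    by_contra hj'
    exact not_le.2 hj (le_max' _ j (by simpa using hj'))
  have hleft : (univ.filter fun x => τ⁻¹ x ≤ i) = univ.filter fun x => τ'⁻¹ x ≤ i := by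
    ext x
    simp only [mem_filter, mem_univ, true_and, ← not_lt]
    refine not_congr ⟨fun hx => ?_, fun hx => ?_⟩
    · rwa [(Perm.inv_eq_iff_eq.2 (by rw [← hright _ hx]; simp) : τ'⁻¹ x = τ⁻¹ x)]
    · rwa [(Perm.inv_eq_iff_eq.2 (by rw [hright _ hx]; simp) : τ⁻¹ x = τ'⁻¹ x)]
  have hmono := strictMonoOn_card_filter_lt (univ.filter fun x => τ⁻¹ x ≤ i)
  refine hi (hmono.injOn (by simp) (by rw [hleft]; simp) ?_)
  have hl := congrArg (fun f : SubexcedantFun n => (f.1 i : ℕ)) h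
  simpa only [lehmerCode, lehmer_eq_card_filter, hleft] using hl

theorem lehmer_eq_self_iff (i : Fin n) : lehmer τ i = i ↔ ∀ j < i, τ j < τ i := by
  rw [Fin.ext_iff, ← Fin.card_Iio i, lehmer, card_filter_eq_iff]
  simp

theorem lehmer_eq_zero_iff (i : Fin n) : (lehmer τ i : ℕ) = 0 ↔ ∀ j < i, τ i < τ j := by
  rw [lehmer, card_filter_eq_zero_iff]
  refine forall_congr' fun j => ?_
  have := τ.injective.eq_iff (a := j) (b := i)
  simp only [mem_Iio]
  grind

theorem sub_lehmer_eq_card (i : Fin n) : (i : ℕ) - lehmer τ i = #{j ∈ Iio i | τ i < τ j} := by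
  have := card_filter_add_card_filter_not (s := Iio i) (fun j => τ j < τ i)
  rw [Fin.card_Iio] at this
  rw [lehmer, ← this, Nat.add_sub_cancel_left]
  congr 1
  refine filter_congr fun j hj => ?_
  have := τ.injective.eq_iff (a := j) (b := i)
  simp only [mem_Iio] at hj
  grind

theorem inv_eq_sum_sub_lehmer : inv τ = ∑ i : Fin n, ((i : ℕ) - lehmer τ i) := by
  rw [inv, card_filter, Fintype.sum_prod_type, sum_comm]
  refine sum_congr rfl fun i _ => ?_
  rw [sub_lehmer_eq_card, ← card_filter]
  congr 1
  ext j
  simp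

/-- If some `m > l` has `τ m < τ l`, the least such `m` has `lehmer τ m ≤ lehmer τ l`. -/
theorem forall_lt_iff_lehmer_lt (l : Fin n) :
    (∀ m, l < m → τ l < τ m) ↔ ∀ m, l < m → lehmer τ l < lehmer τ m := by
  constructor
  · intro h m hlm
    refine Fin.lt_def.2 (card_lt_card ((ssubset_iff_of_subset fun j hj => ?_).2 ⟨l, ?_, by simp⟩))
    · simp only [mem_filter, mem_Iio] at hj ⊢
      exact ⟨hj.1.trans hlm, hj.2.trans (h m hlm)⟩
    · simp [hlm, h m hlm]
  · intro h
    by_contra! hc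
    set S := univ.filter fun m => l < m ∧ τ m < τ l
    have hS : S.Nonempty := by
      obtain ⟨m, hlm, hm⟩ := hc
      refine ⟨m, by simpa [S, hlm] using hm.lt_of_ne (τ.injective.ne hlm.ne')⟩
    obtain ⟨hlm, hml⟩ : l < S.min' hS ∧ τ (S.min' hS) < τ l := by
      simpa [S] using min'_mem S hS
    refine (h _ hlm).not_ge (Fin.le_def.2 (card_le_card fun j hj => ?_))
    simp only [mem_filter, mem_Iio] at hj ⊢
    have hjl : τ j < τ l := hj.2.trans hml
    refine ⟨not_le.1 fun hlj => ?_, hjl⟩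
    rcases hlj.lt_or_eq with hlj | rfl
    · exact hj.1.not_ge (min'_le S j (by simp [S, hlj, hjl]))
    · exact lt_irrefl _ hjl

end Lehmer

theorem codeStats_lehmer_inv (σ : Perm (Fin n)) :
    codeStats (lehmer σ⁻¹) = (inv σ, rmin σ, lmax σ, lmin σ) := by
  simp only [codeStats, Prod.mk.injEq]
  refine ⟨by rw [← inv_inv_eq_inv, inv_eq_sum_sub_lehmer], ?_, ?_, ?_⟩
  · rw [rmin]
    congr 1
    ext l
    simp only [mem_filter, mem_univ, true_and, mem_RmilSet_iff, lehmer_eq_self_iff]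
  · rw [lmax]
    congr 1
    ext l
    simp only [mem_filter, mem_univ, true_and, mem_LmalSet_iff, forall_lt_iff_lehmer_lt]
  · rw [lmin]
    congr 1
    ext l
    simp only [mem_filter, mem_univ, true_and, mem_LmilSet_iff, lehmer_eq_zero_iff]

/-- `τ` maps `Ici l` injectively into `Ici (τ l)`. -/
theorem apply_le_self_of_forall_gt {τ : Perm (Fin n)} {l : Fin n} (h : ∀ m, l < m → τ l < τ m) :
    τ l ≤ l := by
  have hcard := card_le_card_of_injOn τ (s := Ici l) (t := Ici (τ l))
    (fun x hx => by
      rcases (mem_Ici.1 hx).eq_or_lt with rfl | hx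
      · exact mem_Ici.2 le_rfl
      · exact mem_Ici.2 (h x hx).le)
    τ.injective.injOn
  rw [Fin.card_Ici, Fin.card_Ici] at hcard
  have := l.isLt
  have := (τ l).isLt
  exact Fin.le_def.2 (by omega)

section Bcode

variable (σ : Perm (Fin n))

theorem firstExit_Bcode (i : Fin n) : FirstExit ⇑σ⁻¹ (Set.Ioi i) i (Bcode σ i) := by
  have hk := Nat.find_spec (bcode_exists σ i)
  rw [Perm.coe_pow] at hk
  rw [Bcode, Perm.coe_pow]
  refine .of_iterate hk.1 (not_lt.2 hk.2) fun r hr hrk => ?_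
  have := Nat.find_min (bcode_exists σ i) hrk
  rw [Perm.coe_pow] at this
  exact not_le.1 fun h => this ⟨hr, h⟩

variable {σ} in
theorem Bcode_eq_of_firstExit {i c : Fin n} (h : FirstExit ⇑σ⁻¹ (Set.Ioi i) i c) :
    Bcode σ i = c :=
  (firstExit_Bcode σ i).unique h

theorem Bcode_le (i : Fin n) : Bcode σ i ≤ i :=
  not_lt.1 (firstExit_Bcode σ i).notMem

def bcode : SubexcedantFun n := ⟨Bcode σ, Bcode_le σ⟩

theorem Bcode_eq_inv_apply {i : Fin n} (h : σ⁻¹ i ≤ i) : Bcode σ i = σ⁻¹ i :=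
  Bcode_eq_of_firstExit (.exit (not_lt.2 h))

theorem Bcode_eq_self_of_apply_eq {i : Fin n} (h : σ i = i) : Bcode σ i = i := by
  have hi : σ⁻¹ i = i := by rw [Perm.inv_eq_iff_eq, h]
  rw [Bcode_eq_inv_apply σ hi.le, hi]

theorem mem_CycSet_iff (i : Fin n) : i ∈ CycSet σ ↔ Bcode σ i = i := by
  simp only [CycSet, mem_filter, mem_univ, true_and]
  constructor
  · intro h
    have hcyc : σ.SameCycle i (Bcode σ i) :=
      Perm.sameCycle_inv.1 ⟨Nat.find (bcode_exists σ i), by rw [zpow_natCast]; rfl⟩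
    obtain ⟨k, hk⟩ := hcyc.exists_nat_pow_eq
    exact le_antisymm (Bcode_le σ i) (hk ▸ h k)
  · intro h k
    have hcyc : σ⁻¹.SameCycle i ((σ ^ k) i) := Perm.sameCycle_inv.2 ⟨k, by rw [zpow_natCast]⟩
    obtain ⟨r, hr⟩ := hcyc.exists_nat_pow_eq
    have hexit := firstExit_Bcode σ i
    rw [h] at hexit
    rw [← hr, Perm.coe_pow]
    rcases hexit.iterate_eq_or_mem r with hr' | hr'
    · exact hr'.ge
    · exact le_of_lt hr'

/-- If `σ⁻¹ l > l`, the last step of the excursion from `l` starts at some `z > l`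
with `Bcode σ z = Bcode σ l`. -/
theorem forall_lt_iff_Bcode_lt (l : Fin n) :
    (∀ m, l < m → σ⁻¹ l < σ⁻¹ m) ↔ ∀ m, l < m → Bcode σ l < Bcode σ m := by
  constructor
  · intro h m hlm
    have hl : σ⁻¹ l ≤ l := apply_le_self_of_forall_gt h
    obtain ⟨z, hz, hfz⟩ := (firstExit_Bcode σ m).exists_apply_eq
    rw [Bcode_eq_inv_apply σ hl, ← hfz]
    exact h z (hz.elim (· ▸ hlm) hlm.trans)
  · intro h
    have hl : σ⁻¹ l ≤ l := by
      by_contra! hl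
      obtain ⟨z, hz | hz, hfz⟩ := (firstExit_Bcode σ l).exists_apply_eq
      · subst hz
        exact (Bcode_le σ z).not_gt (hfz ▸ hl)
      · have hBz : Bcode σ z = Bcode σ l :=
          (Bcode_eq_inv_apply σ (hfz ▸ (Bcode_le σ l).trans (le_of_lt hz))).trans hfz
        exact (h z hz).ne hBz.symm
    intro m hlm
    refine (lt_or_gt_of_ne (σ⁻¹.injective.ne hlm.ne)).resolve_right fun hml => ?_
    have := h m hlm
    rw [Bcode_eq_inv_apply σ hl, Bcode_eq_inv_apply σ (hml.le.trans (hl.trans hlm.le))] at this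
    exact this.not_gt hml

end Bcode

section Step

variable {σ : Perm (Fin n)} {j : Fin n}

theorem inv_apply_le_of_forall_gt_fixed (hj : ∀ x, j < x → σ x = x) : σ⁻¹ j ≤ j := by
  by_contra! h
  exact h.ne (by simpa using hj _ h)

theorem mul_swap_apply_of_le (hj : ∀ x, j < x → σ x = x) {x : Fin n} (hx : j ≤ x) :
    (σ * swap (σ⁻¹ j) j) x = x := by
  rcases hx.eq_or_lt with rfl | hx
  · simp
  · have hjx := (inv_apply_le_of_forall_gt_fixed hj).trans_lt hx
    rw [Perm.mul_apply, swap_apply_of_ne_of_ne hjx.ne' hx.ne', hj x hx]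

theorem Bcode_mul_swap (hj : ∀ x, j < x → σ x = x) :
    Bcode (σ * swap (σ⁻¹ j) j) = update (Bcode σ) j j := by
  funext m
  rcases eq_or_ne m j with rfl | hm
  · rw [update_self, Bcode_eq_self_of_apply_eq _ (mul_swap_apply_of_le hj le_rfl)]
  rw [update_of_ne hm]
  rcases hm.lt_or_gt with hm | hm
  · have hexit := firstExit_Bcode (σ * swap (σ⁻¹ j) j) m
    rw [mul_inv_rev, swap_inv] at hexit
    exact (Bcode_eq_of_firstExit (hexit.of_swap_mul (f := σ⁻¹) hm hm.ne)).symm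
  · rw [Bcode_eq_self_of_apply_eq _ (mul_swap_apply_of_le hj hm.le),
      Bcode_eq_self_of_apply_eq σ (hj m hm)]

theorem sum_sub_Bcode_eq (hj : ∀ x, j < x → σ x = x) :
    ∑ i : Fin n, ((i : ℕ) - Bcode σ i) =
      ((j : ℕ) - σ⁻¹ j) + ∑ i : Fin n, ((i : ℕ) - Bcode (σ * swap (σ⁻¹ j) j) i) := by
  rw [Bcode_mul_swap hj, ← add_sum_erase _ _ (mem_univ j), ← add_sum_erase _ _ (mem_univ j),
    Bcode_eq_inv_apply σ (inv_apply_le_of_forall_gt_fixed hj), update_self, Nat.sub_self,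
    zero_add]
  exact congrArg _ (sum_congr rfl fun m hm => by rw [update_of_ne (ne_of_mem_erase hm)])

end Step

theorem sum_sub_Bcode_one : ∑ i : Fin n, ((i : ℕ) - Bcode 1 i) = 0 :=
  sum_eq_zero fun i _ => by rw [Bcode_eq_self_of_apply_eq 1 (Perm.one_apply i), Nat.sub_self]

theorem sorAux_eq_sum_sub_Bcode (fuel : ℕ) (σ : Perm (Fin n)) (h : #σ.support ≤ fuel) :
    sorAux fuel σ = ∑ i : Fin n, ((i : ℕ) - Bcode σ i) := by
  induction fuel generalizing σ with
  | zero =>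
    obtain rfl : σ = 1 := Perm.support_eq_empty_iff.1 (card_eq_zero.1 (Nat.le_zero.1 h))
    rw [sorAux, sum_sub_Bcode_one]
  | succ k ih =>
    rw [sorAux]
    split_ifs with hs
    · set J := σ.support.max' hs
      have hJ (x : Fin n) (hx : J < x) : σ x = x :=
        Perm.notMem_support.1 fun hx' => hx.not_ge (le_max' _ x hx')
      have hfix : σ⁻¹ J ≠ J := fun h' =>
        Perm.mem_support.1 (σ.support.max'_mem hs) (Perm.inv_eq_iff_eq.1 h').symm
      have hcard := Perm.card_support_swap_mul hfix
      rw [← Perm.support_inv, mul_inv_rev, inv_inv, swap_inv, swap_comm, Perm.support_inv] at hcard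
      rw [ih _ (by omega), sum_sub_Bcode_eq hJ]
    · obtain rfl : σ = 1 := Perm.support_eq_empty_iff.1 (not_nonempty_iff_eq_empty.1 hs)
      rw [sum_sub_Bcode_one]

theorem sor_eq_sum_sub_Bcode (σ : Perm (Fin n)) : sor σ = ∑ i : Fin n, ((i : ℕ) - Bcode σ i) :=
  sorAux_eq_sum_sub_Bcode n σ ((card_le_univ _).trans_eq (Fintype.card_fin n))

/-- Induction on `k` with `σ`, `τ` fixing every point `≥ k`: both have `σ⁻¹ k = B σ k`,
so their sorting steps at `k` agree and lead to permutations with equal `B`-codes. -/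
theorem Bcode_injective : Injective (Bcode (n := n)) := by
  suffices h : ∀ (k : ℕ) (σ τ : Perm (Fin n)), (∀ x : Fin n, k ≤ x → σ x = x) →
      (∀ x : Fin n, k ≤ x → τ x = x) → Bcode σ = Bcode τ → σ = τ from
    fun σ τ => h n σ τ (fun x hx => absurd x.2 hx.not_gt) (fun x hx => absurd x.2 hx.not_gt)
  intro k
  induction k with
  | zero =>
    intro σ τ hσ hτ _
    ext x
    rw [hσ x x.val.zero_le, hτ x x.val.zero_le]
  | succ k ih =>
    intro σ τ hσ hτ h
    by_cases hk : k < n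
    · set j : Fin n := ⟨k, hk⟩
      have hσj (x : Fin n) (hx : j < x) : σ x = x := hσ x hx
      have hτj (x : Fin n) (hx : j < x) : τ x = x := hτ x hx
      have hinv : σ⁻¹ j = τ⁻¹ j := by
        rw [← Bcode_eq_inv_apply σ (inv_apply_le_of_forall_gt_fixed hσj),
          ← Bcode_eq_inv_apply τ (inv_apply_le_of_forall_gt_fixed hτj), h]
      have hstep : Bcode (σ * swap (σ⁻¹ j) j) = Bcode (τ * swap (τ⁻¹ j) j) := by
        rw [Bcode_mul_swap hσj, Bcode_mul_swap hτj, h]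
      have := ih _ _ (fun x hx => mul_swap_apply_of_le hσj hx)
        (fun x hx => mul_swap_apply_of_le hτj hx) hstep
      rw [hinv] at this
      exact mul_right_cancel this
    · exact ih σ τ (fun x hx => hσ x (by omega)) (fun x hx => hτ x (by omega)) h

theorem codeStats_Bcode (σ : Perm (Fin n)) :
    codeStats (Bcode σ) = (sor σ, cyc σ, lmax σ, lmic1 σ) := by
  simp only [codeStats, Prod.mk.injEq]
  refine ⟨(sor_eq_sum_sub_Bcode σ).symm, ?_, ?_, ?_⟩
  · rw [cyc]
    congr 1
    ext i
    simp only [mem_filter, mem_univ, true_and, mem_CycSet_iff]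
  · rw [lmax]
    congr 1
    ext l
    simp only [mem_filter, mem_univ, true_and, mem_LmalSet_iff, forall_lt_iff_Bcode_lt]
  · simp [lmic1, Lmic1Set, Oset, BcodeNat]

end SortIdx

theorem quadruple_equidistributed_general (n : ℕ) (a b c d : ℕ) :
    Nat.card {σ : Equiv.Perm (Fin n) //
        SortIdx.inv σ = a ∧ SortIdx.rmin σ = b ∧ SortIdx.lmax σ = c ∧ SortIdx.lmin σ = d} =
      Nat.card {σ : Equiv.Perm (Fin n) //
        SortIdx.sor σ = a ∧ SortIdx.cyc σ = b ∧ SortIdx.lmax σ = c ∧ SortIdx.lmic1 σ = d} := by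
  open SortIdx in
  have hA := SubexcedantFun.natCard_fiber_eq (lehmerCode_injective.comp inv_injective)
    (fun σ : Equiv.Perm (Fin n) => (inv σ, rmin σ, lmax σ, lmin σ)) codeStats
    codeStats_lehmer_inv (a, b, c, d)
  have hB := SubexcedantFun.natCard_fiber_eq (e := bcode)
    (fun σ τ h => Bcode_injective (congrArg Subtype.val h))
    (fun σ : Equiv.Perm (Fin n) => (sor σ, cyc σ, lmax σ, lmic1 σ)) codeStats
    codeStats_Bcode (a, b, c, d)
  simp only [Prod.mk.injEq] at hA hB
  rw [hA, hB]

/-- Theorem 1.3(2), equidistribution part.  The quadruples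
`(inv, rmin, lmax, lmin)` and `(sor, cyc, lmax, lmic₁)` have the same joint
distribution on `Sₙ`. -/
theorem quadruple_equidistributed (n : ℕ) (hn : 1 ≤ n) (a b c d : ℕ) :
    Nat.card {σ : Equiv.Perm (Fin n) //
        SortIdx.inv σ = a ∧ SortIdx.rmin σ = b ∧ SortIdx.lmax σ = c ∧ SortIdx.lmin σ = d} =
      Nat.card {σ : Equiv.Perm (Fin n) //
        SortIdx.sor σ = a ∧ SortIdx.cyc σ = b ∧ SortIdx.lmax σ = c ∧ SortIdx.lmic1 σ = d} :=
  quadruple_equidistributed_general n a b c d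
end
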